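/- Let a > 0 and b > 0. Let X and Y be independent random variables on a probability space, each almost surely positive, where X has the weighted Lindley density f_X(x) = (1/((1+a)*Γ(a))) * x^{a-1} * (1+x) * exp(-x) and Y has the weighted Lindley density f_Y(y) = (1/((1+b)*Γ(b))) * y^{b-1} * (1+y) * exp(-y). Then Z = X/(X+Y) has density, for z ∈ (0,1), f_Z(z) = ((a+b+1)/((1+a)*(1+b)*B(a,b))) * z^{a-1} * (1-z)^{b-1} * ((a+b)*z*(1-z) + 1); equivalently, f_Z is the mixture p*f_{Beta(a,b)} + (1-p)*f_{Beta(a+1,b+1)} with p = (a+b+1)/((a+1)*(b+1)). -/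

import Mathlib

open MeasureTheory ProbabilityTheory Real Set

lemma wl_lintegral_image {s : Set ℝ} {f f' : ℝ → ℝ} (hs : MeasurableSet s)
    (hf' : ∀ x ∈ s, HasDerivWithinAt f (f' x) s x) (hf : InjOn f s) (g : ℝ → ENNReal) :
    ∫⁻ x in f '' s, g x = ∫⁻ x in s, ENNReal.ofReal |f' x| * g (f x) := by
  simpa only [ContinuousLinearMap.det_toSpanSingleton] using
    lintegral_image_eq_lintegral_abs_det_fderiv_mul volume hs
      (fun x hx => (hf' x hx).hasFDerivWithinAt) hf g

lemma wl_phi_image {x : ℝ} (hx : 0 < x) :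
    (fun z : ℝ => x * (1 - z) / z) '' Ioo 0 1 = Ioi 0 := by
  ext y
  constructor
  · rintro ⟨z, ⟨hz0, hz1⟩, rfl⟩
    have : 0 < 1 - z := by linarith
    exact mem_Ioi.2 (by positivity)
  · intro hy
    have hy' : (0:ℝ) < y := hy
    refine ⟨x / (x + y), ⟨by positivity, ?_⟩, ?_⟩
    · rw [div_lt_one (by positivity)]; linarith
    · have hxy : x + y ≠ 0 := by positivity
      field_simp; ring

lemma wl_phi_inj {x : ℝ} (hx : 0 < x) :
    InjOn (fun z : ℝ => x * (1 - z) / z) (Ioo 0 1) := by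
  intro z1 ⟨h1, _⟩ z2 ⟨h2, _⟩ h
  simp only at h
  have hz1' : z1 ≠ 0 := ne_of_gt h1
  have hz2' : z2 ≠ 0 := ne_of_gt h2
  field_simp at h
  have h' := h
  linear_combination (-(1:ℝ)) * h'

lemma wl_phi_deriv {x : ℝ} (z : ℝ) (hz : z ∈ Ioo (0:ℝ) 1) :
    HasDerivWithinAt (fun z : ℝ => x * (1 - z) / z) (-(x / z ^ 2)) (Ioo 0 1) z := by
  have hz0 : z ≠ 0 := ne_of_gt hz.1
  have h : HasDerivAt (fun z : ℝ => x * (1 - z) / z) (-(x / z ^ 2)) z := by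
    have h1 : HasDerivAt (fun z : ℝ => x * (1 - z)) (-x) z := by
      simpa using ((hasDerivAt_id z).const_sub 1).const_mul x
    have h2 : HasDerivAt (fun z : ℝ => z) 1 z := hasDerivAt_id z
    have := h1.div h2 hz0
    refine this.congr_deriv ?_
    rw [← neg_div, div_left_inj' (pow_ne_zero 2 hz0)]
    ring
  exact h.hasDerivWithinAt

noncomputable def wlD (c : ℝ) (x : ℝ) : ℝ :=
  1 / ((1 + c) * Real.Gamma c) * (x ^ (c - 1) * (1 + x) * Real.exp (-x))

lemma wlD_meas (c : ℝ) : Measurable fun x => ENNReal.ofReal (wlD c x) := by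
  unfold wlD; fun_prop

lemma wlD_nonneg {c : ℝ} (hc : 0 < c) {x : ℝ} (hx : 0 < x) : 0 ≤ wlD c x := by
  have := Real.Gamma_pos_of_pos hc
  unfold wlD; positivity

lemma wl_gamma_int (p r C : ℝ) (hp : 0 < p) (hr : 0 < r) (hC : 0 ≤ C) :
    ∫⁻ x in Ioi (0:ℝ), ENNReal.ofReal (C * (x ^ (p - 1) * Real.exp (-(r * x)))) =
      ENNReal.ofReal (C * ((1 / r) ^ p * Real.Gamma p)) := by
  have hint : IntegrableOn (fun x : ℝ => C * (x ^ (p - 1) * Real.exp (-(r * x)))) (Ioi 0) := by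
    apply Integrable.const_mul
    have h := integrableOn_rpow_mul_exp_neg_mul_rpow (p := 1) (s := p - 1) (b := r)
      (by linarith) one_pos hr
    refine h.congr_fun (fun x hx => ?_) measurableSet_Ioi
    simp only [Real.rpow_one]; ring_nf
  rw [← ofReal_integral_eq_lintegral_ofReal hint ?_]
  · rw [integral_const_mul, integral_rpow_mul_exp_neg_mul_Ioi hp hr]
  · filter_upwards [ae_restrict_mem measurableSet_Ioi] with x hx
    have : (0:ℝ) < x := hx
    positivity

lemma wl_x_integral (a b : ℝ) (ha : 0 < a) (hb : 0 < b) {z : ℝ} (hz0 : 0 < z) (hz1 : z < 1) :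
    ∫⁻ x in Ioi (0:ℝ), ENNReal.ofReal (wlD a x * (x / z ^ 2 * wlD b (x * (1 - z) / z))) =
    ENNReal.ofReal ((a + b + 1) / ((1 + a) * (1 + b) *
        (Real.Gamma a * Real.Gamma b / Real.Gamma (a + b))) *
      (z ^ (a - 1) * (1 - z) ^ (b - 1) * ((a + b) * z * (1 - z) + 1))) := by
  have hGa : 0 < Real.Gamma a := Real.Gamma_pos_of_pos ha
  have hGb : 0 < Real.Gamma b := Real.Gamma_pos_of_pos hb
  have hz' : 0 < 1 - z := by linarith
  set w : ℝ := (1 - z) / z with hw_def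
  have hw : 0 < w := by positivity
  set c : ℝ := 1 / ((1 + a) * Real.Gamma a) * (1 / ((1 + b) * Real.Gamma b)) with hc_def
  have hc : 0 ≤ c := by positivity
  set K : ℝ := c * w ^ (b - 1) / z ^ 2 with hK_def
  have hK : 0 ≤ K := by positivity
  have hr : (0:ℝ) < 1 / z := by positivity
  -- stage 1 : pointwise rewrite on Ioi 0
  have step1 : ∫⁻ x in Ioi (0:ℝ), ENNReal.ofReal (wlD a x * (x / z ^ 2 * wlD b (x * (1 - z) / z)))
      = ∫⁻ x in Ioi (0:ℝ),
        (ENNReal.ofReal (K * (x ^ ((a + b) - 1) * Real.exp (-(1 / z * x))))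
        + ENNReal.ofReal ((K * (1 + w)) * (x ^ ((a + b + 1) - 1) * Real.exp (-(1 / z * x))))
        + ENNReal.ofReal ((K * w) * (x ^ ((a + b + 2) - 1) * Real.exp (-(1 / z * x))))) := by
    refine setLIntegral_congr_fun measurableSet_Ioi (fun x hx => ?_)
    have hx : (0:ℝ) < x := hx
    have hxw : x * (1 - z) / z = w * x := by rw [hw_def]; ring
    have hpow : (w * x) ^ (b - 1) = w ^ (b - 1) * x ^ (b - 1) :=
      Real.mul_rpow hw.le hx.le
    have hexp : Real.exp (-(1 / z * x)) = Real.exp (-x) * Real.exp (-(w * x)) := by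
      rw [← Real.exp_add]; congr 1; rw [hw_def]; field_simp; ring
    have h1 : x ^ (a + b - 1) = x ^ (a - 1) * x ^ (b - 1) * x := by
      rw [show a + b - 1 = (a - 1) + (b - 1) + 1 by ring, Real.rpow_add hx,
        Real.rpow_add hx, Real.rpow_one]
    have h2 : x ^ (a + b + 1 - 1) = x ^ (a - 1) * x ^ (b - 1) * x * x := by
      rw [show a + b + 1 - 1 = (a - 1) + (b - 1) + 1 + 1 by ring, Real.rpow_add hx,
        Real.rpow_add hx, Real.rpow_add hx, Real.rpow_one]
    have h3 : x ^ (a + b + 2 - 1) = x ^ (a - 1) * x ^ (b - 1) * x * x * x := by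
      rw [show a + b + 2 - 1 = (a - 1) + (b - 1) + 1 + 1 + 1 by ring, Real.rpow_add hx,
        Real.rpow_add hx, Real.rpow_add hx, Real.rpow_add hx, Real.rpow_one]
    have hT1 : (0:ℝ) ≤ K * (x ^ ((a + b) - 1) * Real.exp (-(1 / z * x))) := by positivity
    have hT2 : (0:ℝ) ≤ (K * (1 + w)) * (x ^ ((a + b + 1) - 1) * Real.exp (-(1 / z * x))) := by
      positivity
    rw [← ENNReal.ofReal_add hT1 hT2, ← ENNReal.ofReal_add (by positivity) (by positivity)]
    congr 1
    rw [hxw]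
    unfold wlD
    rw [hpow, h1, h2, h3, hexp, hK_def, hc_def]
    ring
  rw [step1]
  have m1 : Measurable fun x : ℝ =>
      ENNReal.ofReal (K * (x ^ ((a + b) - 1) * Real.exp (-(1 / z * x)))) := by
    fun_prop
  have m2 : Measurable fun x : ℝ =>
      ENNReal.ofReal ((K * (1 + w)) * (x ^ ((a + b + 1) - 1) * Real.exp (-(1 / z * x)))) := by
    fun_prop
  rw [lintegral_add_left (m1.add m2 : Measurable fun x => _ + _), lintegral_add_left m1,
    wl_gamma_int _ _ _ (by linarith) hr hK,
    wl_gamma_int _ _ _ (by linarith) hr (by positivity),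
    wl_gamma_int _ _ _ (by linarith) hr (by positivity)]
  rw [← ENNReal.ofReal_add (by positivity) (by positivity),
    ← ENNReal.ofReal_add (by positivity) (by positivity)]
  congr 1
  -- stage 2 : real algebra
  rw [one_div_one_div]
  have hG1 : Real.Gamma (a + b + 1) = (a + b) * Real.Gamma (a + b) := by
    rw [Real.Gamma_add_one (by positivity)]
  have hG2 : Real.Gamma (a + b + 2) = (a + b + 1) * ((a + b) * Real.Gamma (a + b)) := by
    rw [show a + b + 2 = (a + b + 1) + 1 by ring, Real.Gamma_add_one (by positivity), hG1]
  have e1 : z ^ (a + b) = z ^ (a - 1) * z ^ (b - 1) * z * z := by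
    rw [show a + b = (a - 1) + (b - 1) + 1 + 1 by ring, Real.rpow_add hz0,
      Real.rpow_add hz0, Real.rpow_add hz0, Real.rpow_one]
  have e2 : z ^ (a + b + 1) = z ^ (a - 1) * z ^ (b - 1) * z * z * z := by
    rw [show a + b + 1 = (a + b) + 1 by ring, Real.rpow_add hz0, Real.rpow_one, e1]
  have e3 : z ^ (a + b + 2) = z ^ (a - 1) * z ^ (b - 1) * z * z * z * z := by
    rw [show a + b + 2 = (a + b + 1) + 1 by ring, Real.rpow_add hz0, Real.rpow_one, e2]
  have hw1 : w ^ (b - 1) = (1 - z) ^ (b - 1) / z ^ (b - 1) := by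
    rw [hw_def, Real.div_rpow hz'.le hz0.le]
  have hzb : (0:ℝ) < z ^ (b - 1) := Real.rpow_pos_of_pos hz0 _
  have hGab : 0 < Real.Gamma (a + b) := Real.Gamma_pos_of_pos (by linarith)
  rw [hG1, hG2, e1, e2, e3, hK_def, hw1, hc_def, hw_def]
  have h1a : (1:ℝ) + a ≠ 0 := by positivity
  have h1b : (1:ℝ) + b ≠ 0 := by positivity
  field_simp [hz0.ne', hzb.ne', hGa.ne', hGb.ne', hGab.ne', h1a, h1b]
  ring


theorem wl_part1
    {Ω : Type*} [MeasurableSpace Ω] (P : Measure Ω) [IsProbabilityMeasure P]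
    (a b : ℝ) (ha : 0 < a) (hb : 0 < b)
    (X Y : Ω → ℝ) (hXm : Measurable X) (hYm : Measurable Y)
    (hindep : IndepFun X Y P)
    (hX : P.map X = (volume.restrict (Ioi 0)).withDensity
      (fun x => ENNReal.ofReal (1 / ((1 + a) * Real.Gamma a) *
        (x ^ (a - 1) * (1 + x) * Real.exp (-x)))))
    (hY : P.map Y = (volume.restrict (Ioi 0)).withDensity
      (fun y => ENNReal.ofReal (1 / ((1 + b) * Real.Gamma b) *
        (y ^ (b - 1) * (1 + y) * Real.exp (-y))))) :
    P.map (fun ω => X ω / (X ω + Y ω)) = (volume.restrict (Ioo 0 1)).withDensity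
      (fun z => ENNReal.ofReal ((a + b + 1) / ((1 + a) * (1 + b) *
          (Real.Gamma a * Real.Gamma b / Real.Gamma (a + b))) *
        (z ^ (a - 1) * (1 - z) ^ (b - 1) * ((a + b) * z * (1 - z) + 1)))) := by
  set μa : Measure ℝ := (volume.restrict (Ioi 0)).withDensity
    (fun x => ENNReal.ofReal (wlD a x)) with hμa_def
  set μb : Measure ℝ := (volume.restrict (Ioi 0)).withDensity
    (fun y => ENNReal.ofReal (wlD b y)) with hμb_def
  have hXa : P.map X = μa := hX
  have hYb : P.map Y = μb := hY
  have instA : IsProbabilityMeasure μa := by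
    rw [← hXa]; exact Measure.isProbabilityMeasure_map hXm.aemeasurable
  have instB : IsProbabilityMeasure μb := by
    rw [← hYb]; exact Measure.isProbabilityMeasure_map hYm.aemeasurable
  have hg : Measurable fun p : ℝ × ℝ => p.1 / (p.1 + p.2) :=
    measurable_fst.div (measurable_fst.add measurable_snd)
  have hpairm : Measurable fun ω => (X ω, Y ω) := hXm.prodMk hYm
  have hjoint : P.map (fun ω => (X ω, Y ω)) = μa.prod μb := by
    rw [← hXa, ← hYb]
    exact (indepFun_iff_map_prod_eq_prod_map_map hXm.aemeasurable hYm.aemeasurable).mp hindep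
  have hZeq : P.map (fun ω => X ω / (X ω + Y ω))
      = (μa.prod μb).map (fun p : ℝ × ℝ => p.1 / (p.1 + p.2)) := by
    rw [← hjoint, Measure.map_map hg hpairm]; rfl
  rw [hZeq]
  refine Measure.ext fun s hs => ?_
  rw [Measure.map_apply hg hs, withDensity_apply _ hs]
  have hind : Measurable (s.indicator (1 : ℝ → ENNReal)) := measurable_one.indicator hs
  have hmb2 : Measurable (Function.uncurry fun x y : ℝ =>
      ENNReal.ofReal (wlD b y) * s.indicator 1 (x / (x + y))) :=
    ((wlD_meas b).comp measurable_snd).mul (hind.comp hg)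
  calc (μa.prod μb) ((fun p : ℝ × ℝ => p.1 / (p.1 + p.2)) ⁻¹' s)
      = ∫⁻ p, ((fun p : ℝ × ℝ => p.1 / (p.1 + p.2)) ⁻¹' s).indicator 1 p ∂(μa.prod μb) :=
        (lintegral_indicator_one (hg hs)).symm
    _ = ∫⁻ p : ℝ × ℝ, s.indicator 1 (p.1 / (p.1 + p.2)) ∂(μa.prod μb) := by
        refine lintegral_congr fun p => ?_
        by_cases h : p.1 / (p.1 + p.2) ∈ s <;>
          simp [Set.indicator_apply, Set.mem_preimage, h]
    _ = ∫⁻ x, ∫⁻ y, s.indicator 1 (x / (x + y)) ∂μb ∂μa :=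
        lintegral_prod _ (hind.comp hg).aemeasurable
    _ = ∫⁻ x, ∫⁻ y in Ioi 0, ENNReal.ofReal (wlD b y) * s.indicator 1 (x / (x + y)) ∂volume ∂μa := by
        refine lintegral_congr fun x => ?_
        have hmy : Measurable fun y : ℝ => s.indicator (1 : ℝ → ENNReal) (x / (x + y)) :=
          hind.comp (measurable_const.div (measurable_const.add measurable_id))
        rw [hμb_def, lintegral_withDensity_eq_lintegral_mul _ (wlD_meas b) hmy]
        rfl
    _ = ∫⁻ x in Ioi 0, ENNReal.ofReal (wlD a x) *
          ∫⁻ y in Ioi 0, ENNReal.ofReal (wlD b y) * s.indicator 1 (x / (x + y)) ∂volume ∂volume := by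
        rw [hμa_def, lintegral_withDensity_eq_lintegral_mul _ (wlD_meas a)
          (Measurable.lintegral_prod_right hmb2)]
        rfl
    _ = ∫⁻ x in Ioi 0, ∫⁻ z in Ioo 0 1, ENNReal.ofReal (wlD a x) *
          (ENNReal.ofReal (x / z ^ 2) *
            (ENNReal.ofReal (wlD b (x * (1 - z) / z)) * s.indicator 1 z)) ∂volume ∂volume := by
        refine setLIntegral_congr_fun measurableSet_Ioi
          (fun x hx => ?_)
        have hx : (0:ℝ) < x := hx
        rw [← wl_phi_image hx,
          wl_lintegral_image measurableSet_Ioo (wl_phi_deriv (x := x)) (wl_phi_inj hx),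
          ← lintegral_const_mul' _ _ ENNReal.ofReal_ne_top]
        refine setLIntegral_congr_fun measurableSet_Ioo
          (fun z hz => ?_)
        obtain ⟨hz0, hz1⟩ := hz
        have hzne : z ≠ 0 := ne_of_gt hz0
        have habs : |(-(x / z ^ 2))| = x / z ^ 2 := by
          rw [abs_neg, abs_of_nonneg (by positivity)]
        have harg : x / (x + x * (1 - z) / z) = z := by
          have hsum : x + x * (1 - z) / z = x / z := by field_simp; ring
          rw [hsum]
          field_simp
        simp only [habs, harg]
    _ = ∫⁻ z in Ioo 0 1, ∫⁻ x in Ioi 0, ENNReal.ofReal (wlD a x) *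
          (ENNReal.ofReal (x / z ^ 2) *
            (ENNReal.ofReal (wlD b (x * (1 - z) / z)) * s.indicator 1 z)) ∂volume ∂volume := by
        apply lintegral_lintegral_swap
        have hm : Measurable fun q : ℝ × ℝ => ENNReal.ofReal (wlD a q.1) *
            (ENNReal.ofReal (q.1 / q.2 ^ 2) *
              (ENNReal.ofReal (wlD b (q.1 * (1 - q.2) / q.2)) * s.indicator 1 q.2)) := by
          refine ((wlD_meas a).comp measurable_fst).mul (Measurable.mul ?_ (Measurable.mul ?_ ?_))
          · exact (measurable_fst.div (measurable_snd.pow measurable_const)).ennreal_ofReal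
          · exact (wlD_meas b).comp
              ((measurable_fst.mul (measurable_const.sub measurable_snd)).div measurable_snd)
          · exact hind.comp measurable_snd
        exact hm.aemeasurable
    _ = ∫⁻ z in Ioo 0 1, s.indicator 1 z * ENNReal.ofReal ((a + b + 1) / ((1 + a) * (1 + b) *
          (Real.Gamma a * Real.Gamma b / Real.Gamma (a + b))) *
        (z ^ (a - 1) * (1 - z) ^ (b - 1) * ((a + b) * z * (1 - z) + 1))) ∂volume := by
        refine setLIntegral_congr_fun measurableSet_Ioo
          (fun z hz => ?_)
        obtain ⟨hz0, hz1⟩ := hz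
        have hindne : s.indicator (1 : ℝ → ENNReal) z ≠ ⊤ := by
          by_cases h : z ∈ s <;> simp [h]
        rw [← wl_x_integral a b ha hb hz0 hz1, ← lintegral_const_mul' _ _ hindne]
        refine setLIntegral_congr_fun measurableSet_Ioi
          (fun x hx => ?_)
        have hx : (0:ℝ) < x := hx
        rw [ENNReal.ofReal_mul (wlD_nonneg ha hx), ENNReal.ofReal_mul (by positivity)]
        ring
    _ = ∫⁻ z in Ioo 0 1, s.indicator (fun z => ENNReal.ofReal ((a + b + 1) / ((1 + a) * (1 + b) *
          (Real.Gamma a * Real.Gamma b / Real.Gamma (a + b))) *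
        (z ^ (a - 1) * (1 - z) ^ (b - 1) * ((a + b) * z * (1 - z) + 1)))) z ∂volume := by
        refine lintegral_congr fun z => ?_
        by_cases h : z ∈ s <;> simp [Set.indicator_apply, h]
    _ = ∫⁻ z in s, ENNReal.ofReal ((a + b + 1) / ((1 + a) * (1 + b) *
          (Real.Gamma a * Real.Gamma b / Real.Gamma (a + b))) *
        (z ^ (a - 1) * (1 - z) ^ (b - 1) * ((a + b) * z * (1 - z) + 1)))
          ∂(volume.restrict (Ioo 0 1)) := lintegral_indicator hs _


lemma wl_part2 (a b : ℝ) (ha : 0 < a) (hb : 0 < b) :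
    ∀ z ∈ Ioo (0:ℝ) 1,
      (a + b + 1) / ((1 + a) * (1 + b) *
          (Real.Gamma a * Real.Gamma b / Real.Gamma (a + b))) *
        (z ^ (a - 1) * (1 - z) ^ (b - 1) * ((a + b) * z * (1 - z) + 1)) =
      (a + b + 1) / ((a + 1) * (b + 1)) *
        (z ^ (a - 1) * (1 - z) ^ (b - 1) /
          (Real.Gamma a * Real.Gamma b / Real.Gamma (a + b))) +
      (1 - (a + b + 1) / ((a + 1) * (b + 1))) *
        (z ^ a * (1 - z) ^ b /
          (Real.Gamma (a + 1) * Real.Gamma (b + 1) / Real.Gamma (a + b + 2))) := by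
  intro z hz
  obtain ⟨hz0, hz1⟩ := hz
  have hz' : (0:ℝ) < 1 - z := by linarith
  have hGa : 0 < Real.Gamma a := Real.Gamma_pos_of_pos ha
  have hGb : 0 < Real.Gamma b := Real.Gamma_pos_of_pos hb
  have hGab : 0 < Real.Gamma (a + b) := Real.Gamma_pos_of_pos (by linarith)
  have hza : z ^ a = z ^ (a - 1) * z := by
    rw [← Real.rpow_add_one (ne_of_gt hz0) (a - 1)]; norm_num
  have hzb : (1 - z) ^ b = (1 - z) ^ (b - 1) * (1 - z) := by
    rw [← Real.rpow_add_one (ne_of_gt hz') (b - 1)]; norm_num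
  have hG1 : Real.Gamma (a + 1) = a * Real.Gamma a := Real.Gamma_add_one ha.ne'
  have hG2 : Real.Gamma (b + 1) = b * Real.Gamma b := Real.Gamma_add_one hb.ne'
  have hG3 : Real.Gamma (a + b + 2) = (a + b + 1) * ((a + b) * Real.Gamma (a + b)) := by
    rw [show a + b + 2 = (a + b + 1) + 1 by ring, Real.Gamma_add_one (by positivity),
      Real.Gamma_add_one (by positivity)]
  have h1a : (1:ℝ) + a ≠ 0 := by positivity
  have h1b : (1:ℝ) + b ≠ 0 := by positivity
  have hab1 : a + b + 1 ≠ 0 := by positivity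
  have hab : a + b ≠ 0 := by positivity
  rw [hza, hzb, hG1, hG2, hG3]
  field_simp [hz0.ne', hGa.ne', hGb.ne', hGab.ne', h1a, h1b]
  ring


theorem weighted_lindley_ratio
    {Ω : Type*} [MeasurableSpace Ω] (P : Measure Ω) [IsProbabilityMeasure P]
    (a b : ℝ) (ha : 0 < a) (hb : 0 < b)
    (X Y : Ω → ℝ) (hXm : Measurable X) (hYm : Measurable Y)
    (hindep : IndepFun X Y P)
    (hXpos : ∀ᵐ ω ∂P, 0 < X ω) (hYpos : ∀ᵐ ω ∂P, 0 < Y ω)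
    (hX : P.map X = (volume.restrict (Ioi 0)).withDensity
      (fun x => ENNReal.ofReal (1 / ((1 + a) * Real.Gamma a) *
        (x ^ (a - 1) * (1 + x) * Real.exp (-x)))))
    (hY : P.map Y = (volume.restrict (Ioi 0)).withDensity
      (fun y => ENNReal.ofReal (1 / ((1 + b) * Real.Gamma b) *
        (y ^ (b - 1) * (1 + y) * Real.exp (-y))))) :
    P.map (fun ω => X ω / (X ω + Y ω)) = (volume.restrict (Ioo 0 1)).withDensity
      (fun z => ENNReal.ofReal ((a + b + 1) / ((1 + a) * (1 + b) *
          (Real.Gamma a * Real.Gamma b / Real.Gamma (a + b))) *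
        (z ^ (a - 1) * (1 - z) ^ (b - 1) * ((a + b) * z * (1 - z) + 1)))) ∧
    ∀ z ∈ Ioo (0:ℝ) 1,
      (a + b + 1) / ((1 + a) * (1 + b) *
          (Real.Gamma a * Real.Gamma b / Real.Gamma (a + b))) *
        (z ^ (a - 1) * (1 - z) ^ (b - 1) * ((a + b) * z * (1 - z) + 1)) =
      (a + b + 1) / ((a + 1) * (b + 1)) *
        (z ^ (a - 1) * (1 - z) ^ (b - 1) /
          (Real.Gamma a * Real.Gamma b / Real.Gamma (a + b))) +
      (1 - (a + b + 1) / ((a + 1) * (b + 1))) *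
        (z ^ a * (1 - z) ^ b /
          (Real.Gamma (a + 1) * Real.Gamma (b + 1) / Real.Gamma (a + b + 2))) := by
  exact ⟨wl_part1 P a b ha hb X Y hXm hYm hindep hX hY, wl_part2 a b ha hb⟩
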